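/- Let 1 ≤ i < j ≤ m−1 and let n = 4. Then β_j ≱_PS β_i; that is, there exists a profile of 4 preferences over m candidates at which the i-Borda rule β_i is manipulable but the j-Borda rule β_j is not manipulable. -/

import Mathlib

/-- A preference order on `m` candidates: `σ c` is the position of candidate `c`
(position `0` is the most preferred). `σ c < σ d` means `c` is strictly preferred to `d`. -/
abbrev Pref (m : ℕ) := Fin m ≃ Fin m

/-- A voting rule for `n` voters and `m` candidates. -/
abbrev Rule (m n : ℕ) := (Fin n → Pref m) → Fin m

/-- Total score of candidate `c` under score vector `s` (indexed by position) at profile `P`. -/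
def score {m n : ℕ} (s : Fin m → ℕ) (P : Fin n → Pref m) (c : Fin m) : ℕ :=
  ∑ v, s (P v c)

/-- The scoring rule with score vector `s`: the winner is the candidate that is first in the
lexicographic tie-breaking order (i.e. has the least index) among those of maximal score. -/
def winner {m n : ℕ} [NeZero m] (s : Fin m → ℕ) (P : Fin n → Pref m) : Fin m :=
  (Finset.univ.filter fun c => ∀ d, score s P d ≤ score s P c).min' (by
    obtain ⟨c, -, hc⟩ := Finset.exists_max_image Finset.univ (score s P) Finset.univ_nonempty
    exact ⟨c, Finset.mem_filter.mpr ⟨Finset.mem_univ c, fun d => hc d (Finset.mem_univ d)⟩⟩)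

/-- `k`-approval, `α_k`: one point for each of the top `k` positions. -/
def approval (m n k : ℕ) [NeZero m] : Rule m n :=
  winner (fun r => if (r : ℕ) < k then 1 else 0)

/-- `k`-Borda, `β_k`: `max (0, k - r + 1)` points for (`1`-indexed) position `r`, i.e. `k - r`
(truncated subtraction) points for `0`-indexed position `r`. -/
def kBorda (m n k : ℕ) [NeZero m] : Rule m n :=
  winner (fun r => k - (r : ℕ))

/-- `f` is manipulable at profile `P`: some voter `v` can misreport some preference `Q` and
obtain an outcome strictly preferred (by `v`'s true preferences) to the sincere outcome. -/
def Manipulable {m n : ℕ} (f : Rule m n) (P : Fin n → Pref m) : Prop :=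
  ∃ (v : Fin n) (Q : Pref m), P v (f (Function.update P v Q)) < P v (f P)

/-- `f ≥_PS g` : every profile at which `g` is manipulable is one at which `f` is manipulable. -/
def MoreManip {m n : ℕ} (f g : Rule m n) : Prop :=
  ∀ P : Fin n → Pref m, Manipulable g P → Manipulable f P


/-!
The candidates are `a = 0`, `b = 1`, `u = 2`, a block `D = {3, …, i + 1}` and a block
`E = {i + 2, …, j}`; every later candidate sits at its own index in every ballot and so scores
nothing under `β_k` for `k ≤ j`. Voters 0 and 2 rank `b` first, voter 1 ranks `u, a, b` on top,
and voter 3 ranks `a` first and `b` in position `i + 1`, just outside the scoring positions of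
`β_i`. Under both `β_i` and `β_j` the winner is `b`. Under `β_i`, voter 1 can rank `a` first and
move `b` to position `j + 1`: then `a` and `b` tie at `2i` and `a` wins the tie. Under `β_j`,
voters 0 and 2 already get their favourite, and `b`'s lead over `a`, `u` and `D` exceeds what one
ballot of voter 1 or voter 3 can swing.
-/

section ScoringRule

variable {m n : ℕ} (s : Fin m → ℕ) (P : Fin n → Pref m)

lemma score_update_add (v : Fin n) (Q : Pref m) (c : Fin m) :
    score s (Function.update P v Q) c + s (P v c) = score s P c + s (Q c) := by
  simp only [score]
  rw [← Finset.sum_erase_add _ _ (Finset.mem_univ v),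
    ← Finset.sum_erase_add _ _ (Finset.mem_univ v), Function.update_self]
  have hrest : ∑ u ∈ Finset.univ.erase v, s (Function.update P v Q u c) =
      ∑ u ∈ Finset.univ.erase v, s (P u c) :=
    Finset.sum_congr rfl fun u hu => by rw [Function.update_of_ne (Finset.ne_of_mem_erase hu)]
  omega

variable [NeZero m]

lemma score_le_score_winner (d : Fin m) : score s P d ≤ score s P (winner s P) := by
  unfold winner
  exact (Finset.mem_filter.mp
    (Finset.min'_mem (Finset.univ.filter fun c => ∀ d, score s P d ≤ score s P c) _)).2 d

lemma winner_le_of_forall_score_le {c : Fin m} (hc : ∀ d, score s P d ≤ score s P c) :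
    winner s P ≤ c :=
  Finset.min'_le _ _ (Finset.mem_filter.mpr ⟨Finset.mem_univ c, hc⟩)

lemma winner_ne_of_score_lt {c d : Fin m} (h : score s P c < score s P d) : winner s P ≠ c := by
  rintro rfl
  exact (score_le_score_winner s P d).not_gt h

lemma winner_ne_of_lt_of_score_le {c d : Fin m} (hdc : d < c) (h : score s P c ≤ score s P d) :
    winner s P ≠ c := by
  rintro rfl
  exact (winner_le_of_forall_score_le s P fun e => (score_le_score_winner s P e).trans h).not_gt hdc

lemma winner_eq_of_forall_score_le {w : Fin m} (hmax : ∀ d, score s P d ≤ score s P w)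
    (hlt : ∀ c < w, score s P c < score s P w) : winner s P = w :=
  (winner_le_of_forall_score_le s P hmax).antisymm <| not_lt.mp fun h =>
    winner_ne_of_score_lt s P (hlt _ h) rfl

/-- Voter `v` can raise `c` by at most `M - s (P v c)` and lower `w` by at most `s (P v w)`, so
these margins keep `w` ahead of every `c` that `v` prefers to it. -/
theorem not_manipulable_winner_of_margin {M : ℕ} (hs : ∀ r, s r ≤ M) {w : Fin m}
    (hw : winner s P = w)
    (hmargin : ∀ v c, P v c < P v w →
      score s P c + M + s (P v w) < score s P w + s (P v c) ∨
        w < c ∧ score s P c + M + s (P v w) ≤ score s P w + s (P v c)) :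
    ¬ Manipulable (winner s) P := by
  rintro ⟨v, Q, hvQ⟩
  rw [hw] at hvQ
  generalize hcw : winner s (Function.update P v Q) = c at hvQ
  have hc := score_update_add s P v Q c
  have hw' := score_update_add s P v Q w
  have := hs (Q c)
  rcases hmargin v c hvQ with h | ⟨hwc, h⟩
  · exact winner_ne_of_score_lt s (Function.update P v Q) (d := w) (by omega) hcw
  · exact winner_ne_of_lt_of_score_le s (Function.update P v Q) hwc (by omega) hcw

end ScoringRule

noncomputable def prefOfInjective {m : ℕ} (p : ℕ → ℕ)
    (hmaps : Set.MapsTo p (Set.Iio m) (Set.Iio m)) (hinj : p.Injective) : Pref m :=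
  Equiv.ofBijective (fun c => ⟨p c, hmaps c.2⟩) <| Finite.injective_iff_bijective.mp
    fun _ _ h => Fin.ext (hinj (congrArg Fin.val h))

@[simp]
lemma prefOfInjective_apply_val {m : ℕ} (p : ℕ → ℕ)
    (hmaps : Set.MapsTo p (Set.Iio m) (Set.Iio m)) (hinj : p.Injective) (c : Fin m) :
    (prefOfInjective p hmaps hinj c : ℕ) = p c :=
  rfl

namespace KBordaCounterexample

/-- The position of candidate `c` in the ballot placing `a`, `b`, `u` at `pa`, `pb`, `pu` and the
blocks `D`, `E` by `pD`, `pE`. -/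
def ballot (i j pa pb pu : ℕ) (pD pE : ℕ → ℕ) (c : ℕ) : ℕ :=
  if c = 0 then pa else if c = 1 then pb else if c = 2 then pu
  else if c ≤ i + 1 then pD c else if c ≤ j then pE c else c

section Ballot

variable {i j pa pb pu : ℕ} {pD pE : ℕ → ℕ}

@[simp] lemma ballot_zero : ballot i j pa pb pu pD pE 0 = pa := rfl
@[simp] lemma ballot_one : ballot i j pa pb pu pD pE 1 = pb := rfl

end Ballot

/- Read top first, the rankings are `b, E, D (descending), u, a` for `ballotB`, `u, a, b, 3, 4, …`
for `ballotU`, `a, D, b, E, u` for `ballotA` and `a, u, D, E, b` for `ballotLie`. -/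

def ballotB (i j : ℕ) : ℕ → ℕ :=
  ballot i j j 0 (j - 1) (fun c => j + 1 - c) (fun c => c - i - 1)

def ballotU (i j : ℕ) : ℕ → ℕ := ballot i j 1 2 0 (fun c => c) (fun c => c)

def ballotA (i j : ℕ) : ℕ → ℕ := ballot i j 0 i j (· - 2) (· - 1)

def ballotLie (i j : ℕ) : ℕ → ℕ := ballot i j 0 j 1 (· - 1) (· - 1)

def sincereScore (i j k c : ℕ) : ℕ :=
  2 * (k - ballotB i j c) + (k - ballotU i j c) + (k - ballotA i j c)

def lieScore (i j k c : ℕ) : ℕ :=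
  2 * (k - ballotB i j c) + (k - ballotLie i j c) + (k - ballotA i j c)

section Arithmetic

variable {i j : ℕ}

lemma sincereScore_le_sincereScore_one (hi : 1 ≤ i) (hij : i < j) {k : ℕ} (hik : i ≤ k)
    (hkj : k ≤ j) (c : ℕ) :
    sincereScore i j k c ≤ sincereScore i j k 1 := by
  simp only [sincereScore, ballotB, ballotU, ballotA, ballot_one]
  simp only [ballot]
  split_ifs <;> omega

lemma sincereScore_zero_lt_sincereScore_one (hi : 1 ≤ i) (hij : i < j) {k : ℕ} (hik : i ≤ k)
    (hkj : k ≤ j) :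
    sincereScore i j k 0 < sincereScore i j k 1 := by
  simp only [sincereScore, ballotB, ballotU, ballotA, ballot_zero, ballot_one]
  omega

lemma lieScore_le_lieScore_zero (hi : 1 ≤ i) (hij : i < j) (c : ℕ) :
    lieScore i j i c ≤ lieScore i j i 0 := by
  simp only [lieScore, ballotB, ballotLie, ballotA, ballot_zero]
  simp only [ballot]
  split_ifs <;> omega

lemma margin_ballotU (hi : 1 ≤ i) (hij : i < j) (c : ℕ) (hc : ballotU i j c < ballotU i j 1) :
    sincereScore i j j c + j + (j - ballotU i j 1) < sincereScore i j j 1 + (j - ballotU i j c) ∨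
      1 < c ∧ sincereScore i j j c + j + (j - ballotU i j 1) ≤
        sincereScore i j j 1 + (j - ballotU i j c) := by
  simp only [sincereScore, ballotB, ballotU, ballotA, ballot_one] at hc ⊢
  simp only [ballot] at hc ⊢
  split_ifs at hc ⊢ <;> omega

lemma margin_ballotA (hi : 1 ≤ i) (hij : i < j) (c : ℕ) (hc : ballotA i j c < ballotA i j 1) :
    sincereScore i j j c + j + (j - ballotA i j 1) < sincereScore i j j 1 + (j - ballotA i j c) ∨
      1 < c ∧ sincereScore i j j c + j + (j - ballotA i j 1) ≤
        sincereScore i j j 1 + (j - ballotA i j c) := by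
  simp only [sincereScore, ballotB, ballotU, ballotA, ballot_one] at hc ⊢
  simp only [ballot] at hc ⊢
  split_ifs at hc ⊢ <;> omega

end Arithmetic

section Rankings

variable {m i j : ℕ}

lemma ballotB_mapsTo (hij : i < j) (hjm : j < m) :
    Set.MapsTo (ballotB i j) (Set.Iio m) (Set.Iio m) := by
  intro c (hc : c < m)
  simp only [Set.mem_Iio, ballotB, ballot]
  split_ifs <;> omega

lemma ballotU_mapsTo (hi : 1 ≤ i) (hij : i < j) (hjm : j < m) :
    Set.MapsTo (ballotU i j) (Set.Iio m) (Set.Iio m) := by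
  intro c (hc : c < m)
  simp only [Set.mem_Iio, ballotU, ballot]
  split_ifs <;> omega

lemma ballotA_mapsTo (hij : i < j) (hjm : j < m) :
    Set.MapsTo (ballotA i j) (Set.Iio m) (Set.Iio m) := by
  intro c (hc : c < m)
  simp only [Set.mem_Iio, ballotA, ballot]
  split_ifs <;> omega

lemma ballotLie_mapsTo (hij : i < j) (hjm : j < m) :
    Set.MapsTo (ballotLie i j) (Set.Iio m) (Set.Iio m) := by
  intro c (hc : c < m)
  simp only [Set.mem_Iio, ballotLie, ballot]
  split_ifs <;> omega

lemma ballotB_injective (hi : 1 ≤ i) (hij : i < j) : (ballotB i j).Injective := by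
  intro c d h
  simp only [ballotB, ballot] at h
  split_ifs at h <;> omega

lemma ballotU_injective : (ballotU i j).Injective := by
  intro c d h
  simp only [ballotU, ballot] at h
  split_ifs at h <;> omega

lemma ballotA_injective (hi : 1 ≤ i) (hij : i < j) : (ballotA i j).Injective := by
  intro c d h
  simp only [ballotA, ballot] at h
  split_ifs at h <;> omega

lemma ballotLie_injective (hi : 1 ≤ i) (hij : i < j) : (ballotLie i j).Injective := by
  intro c d h
  simp only [ballotLie, ballot] at h
  split_ifs at h <;> omega

end Rankings

variable {m i j : ℕ} (hi : 1 ≤ i) (hij : i < j) (hjm : j < m)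

noncomputable def profile : Fin 4 → Pref m :=
  ![prefOfInjective (ballotB i j) (ballotB_mapsTo hij hjm) (ballotB_injective hi hij),
    prefOfInjective (ballotU i j) (ballotU_mapsTo hi hij hjm) ballotU_injective,
    prefOfInjective (ballotB i j) (ballotB_mapsTo hij hjm) (ballotB_injective hi hij),
    prefOfInjective (ballotA i j) (ballotA_mapsTo hij hjm) (ballotA_injective hi hij)]

noncomputable def lie : Pref m :=
  prefOfInjective (ballotLie i j) (ballotLie_mapsTo hij hjm) (ballotLie_injective hi hij)

lemma profile_apply_val (v : Fin 4) (c : Fin m) :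
    (profile hi hij hjm v c : ℕ) = ![ballotB i j, ballotU i j, ballotB i j, ballotA i j] v c := by
  fin_cases v <;> rfl

lemma score_profile (k : ℕ) (c : Fin m) :
    score (fun r => k - r) (profile hi hij hjm) c = sincereScore i j k c := by
  simp [score, Fin.sum_univ_four, profile, sincereScore]
  ring

lemma score_update_lie (k : ℕ) (c : Fin m) :
    score (fun r => k - r) (Function.update (profile hi hij hjm) 1 (lie hi hij hjm)) c =
      lieScore i j k c := by
  simp [score, Fin.sum_univ_four, profile, lie, lieScore]
  ring

variable [NeZero m]

lemma kBorda_profile {k : ℕ} (hik : i ≤ k) (hkj : k ≤ j) :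
    (kBorda m 4 k (profile hi hij hjm) : ℕ) = 1 := by
  have hw := winner_eq_of_forall_score_le (fun r => k - r) (profile hi hij hjm)
    (w := ⟨1, by omega⟩)
    (fun d => by
      simpa only [score_profile] using sincereScore_le_sincereScore_one hi hij hik hkj d)
    (fun c hc => by
      rw [show c = ⟨0, by omega⟩ from Fin.ext (by simpa [Fin.lt_def] using hc)]
      simpa only [score_profile] using sincereScore_zero_lt_sincereScore_one hi hij hik hkj)
  simp [kBorda, hw]

lemma kBorda_update_lie :
    (kBorda m 4 i (Function.update (profile hi hij hjm) 1 (lie hi hij hjm)) : ℕ) = 0 := by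
  have hw := winner_eq_of_forall_score_le (fun r => i - r)
    (Function.update (profile hi hij hjm) 1 (lie hi hij hjm)) (w := ⟨0, by omega⟩)
    (fun d => by simpa only [score_update_lie] using lieScore_le_lieScore_zero hi hij d)
    (fun c hc => absurd hc (Fin.not_lt_zero c))
  simp [kBorda, hw]

lemma manipulable_kBorda_profile : Manipulable (kBorda m 4 i) (profile hi hij hjm) := by
  refine ⟨1, lie hi hij hjm, ?_⟩
  rw [Fin.lt_def, profile_apply_val, profile_apply_val, kBorda_update_lie,
    kBorda_profile hi hij hjm le_rfl hij.le]
  simp [ballotU]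

lemma not_manipulable_kBorda_profile : ¬ Manipulable (kBorda m 4 j) (profile hi hij hjm) := by
  refine not_manipulable_winner_of_margin _ _ (M := j) (fun r => Nat.sub_le _ _)
    (w := ⟨1, by omega⟩) (Fin.ext (kBorda_profile hi hij hjm hij.le le_rfl)) ?_
  intro v c hc
  rw [Fin.lt_def, profile_apply_val, profile_apply_val] at hc
  simp only [score_profile, profile_apply_val]
  fin_cases v
  · simp [ballotB] at hc
  · exact margin_ballotU hi hij c hc
  · simp [ballotB] at hc
  · exact margin_ballotA hi hij c hc

end KBordaCounterexample

/-- For `1 ≤ i < j ≤ m-1` and `n = 4`: `β_j ≱_PS β_i`. -/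
theorem stmt_14 (m i j : ℕ) [NeZero m] (hi : 1 ≤ i) (hij : i < j) (hj : j ≤ m - 1) :
    ∃ P : Fin 4 → Pref m,
      Manipulable (kBorda m 4 i) P ∧ ¬ Manipulable (kBorda m 4 j) P := by
  have hjm : j < m := by have := NeZero.pos m; omega
  exact ⟨KBordaCounterexample.profile hi hij hjm,
    KBordaCounterexample.manipulable_kBorda_profile hi hij hjm,
    KBordaCounterexample.not_manipulable_kBorda_profile hi hij hjm⟩
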